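/- arXiv:2412.16263 — 2 statements merged into one kernel-verified Lean document; each statement's English description precedes it below -/
import Mathlib

section
/- Let $f:\mathbb{R}_+\to\mathbb{R}_+$ be a concave increasing function with $f(0)=0$, and let $\Theta,\Theta'\in\mathbb{R}^{d_1\times d_2}$ with $d=\min\{d_1,d_2\}$. Then $\sum_{j=1}^d f(\sigma_j(\Theta+\Theta'))\le \sum_{j=1}^d f(\sigma_j(\Theta))+\sum_{j=1}^d f(\sigma_j(\Theta'))$, where $\sigma_j(\cdot)$ denotes the $j$-th largest singular value. -/
/-- The `j`-th singular value of a real matrix `A`, as the square root of the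
`j`-th eigenvalue of `Aᴴ * A` (square roots of the eigenvalues of `AᴴA` enumerate
the singular values of `A`, padded with zeros). -/
noncomputable def singularValue {d1 d2 : ℕ} (A : Matrix (Fin d1) (Fin d2) ℝ)
    (j : Fin d2) : ℝ :=
  Real.sqrt ((Matrix.isHermitian_conjTranspose_mul_self A).eigenvalues j)

/-- Sum of `f` applied to the singular values of `A`. Since `f 0 = 0` is assumed,
this agrees with `∑_{j=1}^{min d1 d2} f (σ_j A)`. -/
noncomputable def singValSum {d1 d2 : ℕ} (f : ℝ → ℝ)
    (A : Matrix (Fin d1) (Fin d2) ℝ) : ℝ :=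
  ∑ j, f (singularValue A j)

/-!
Every concave nondecreasing `f` on `[0, ∞)` with `f 0 = 0` agrees, on any finite set of
nonnegative reals, with a nonnegative combination of the functions `x ↦ min x t`, `t ≥ 0`.
By induction on the set: if `a` is its largest point, `b < a` the next one (or `0`) and `μ` the
slope of `f` on `[b, a]`, then `f = μ · min · a + g` on the set, where
`g x = f (min x b) - μ · min x b` is again concave, nondecreasing and zero at `0`. It is
therefore enough to prove the inequality for `f = min · s`.

For this, let `W` be spanned by the right singular vectors of `A` and of `B` whose singular
values exceed `s`, and let `P` be the orthogonal projection onto `Wᗮ`. With `(uⱼ, vⱼ)` the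
singular pairs of `C = A + B` and `pⱼ = ⟪vⱼ, P vⱼ⟫ ∈ [0, 1]`, one has `∑ (1 - pⱼ) = dim W` and
`min σⱼ s ≤ (1 - pⱼ) s + pⱼ σⱼ`, while `∑ pⱼ σⱼ(C) = ∑ ⟪uⱼ, C P vⱼ⟫` splits into an `A` and a
`B` part. Trace duality bounds the `A` part by `∑ₖ ‖P vₖ(A)‖ σₖ(A)`, in which the singular
values above `s` do not appear since `P` kills their singular vectors.
-/

open Set Finset Module
open scoped RealInnerProductSpace

lemma ConcaveOn.monotoneOn_sub_slope_mul {f : ℝ → ℝ} (hf : ConcaveOn ℝ (Ici 0) f) {a b : ℝ}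
    (hba : b < a) : MonotoneOn (fun x => f x - slope f b a * x) (Icc 0 b) := by
  intro x hx y hy hxy
  rcases hxy.eq_or_lt with rfl | hxy
  · rfl
  have hxa : x < a := hx.2.trans_lt hba
  have hslope : slope f b a ≤ slope f x y :=
    calc slope f b a = slope f a b := slope_comm f b a
      _ ≤ slope f a x := hf.slope_anti (le_trans hx.1 hxa.le) ⟨hx.1, hxa.ne⟩
          ⟨hx.1.trans hx.2, hba.ne⟩ hx.2
      _ = slope f x a := slope_comm f a x
      _ ≤ slope f x y := hf.slope_anti hx.1 ⟨hy.1, hxy.ne'⟩ ⟨hx.1.trans hxa.le, hxa.ne'⟩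
          (hy.2.trans hba.le)
  rw [slope_def_field f x y, le_div_iff₀ (sub_pos.2 hxy)] at hslope
  dsimp only
  linarith

lemma concaveOn_comp_min {φ : ℝ → ℝ} {b : ℝ} (hb : 0 ≤ b) (hφ : ConcaveOn ℝ (Ici 0) φ)
    (hmono : MonotoneOn φ (Icc 0 b)) : ConcaveOn ℝ (Ici 0) (fun x => φ (min x b)) := by
  have himage : (fun x => min x b) '' Ici 0 = Icc 0 b := by
    ext y
    refine ⟨?_, fun hy => ⟨y, hy.1, min_eq_left hy.2⟩⟩
    rintro ⟨x, hx, rfl⟩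
    exact ⟨le_min hx hb, min_le_right x b⟩
  refine ConcaveOn.comp (g := φ) ?_
    ((concaveOn_id (convex_Ici 0)).inf (concaveOn_const b (convex_Ici 0))) ?_
  · rw [himage]; exact hφ.subset Icc_subset_Ici_self (convex_Icc 0 b)
  · rw [himage]; exact hmono

lemma ConcaveOn.concaveOn_sub_slope_mul_min {f : ℝ → ℝ} (hf : ConcaveOn ℝ (Ici 0) f) {a b : ℝ}
    (hb : 0 ≤ b) (hba : b < a) :
    ConcaveOn ℝ (Ici 0) (fun x => f (min x b) - slope f b a * min x b) :=
  concaveOn_comp_min hb (hf.sub (LinearMap.convexOn (slope f b a • LinearMap.id) (convex_Ici 0)))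
    (hf.monotoneOn_sub_slope_mul hba)

lemma ConcaveOn.monotoneOn_sub_slope_mul_min {f : ℝ → ℝ} (hf : ConcaveOn ℝ (Ici 0) f) {a b : ℝ}
    (hb : 0 ≤ b) (hba : b < a) :
    MonotoneOn (fun x => f (min x b) - slope f b a * min x b) (Ici 0) := fun x hx y hy hxy =>
  hf.monotoneOn_sub_slope_mul hba ⟨le_min hx hb, min_le_right x b⟩
    ⟨le_min hy hb, min_le_right y b⟩ (min_le_min_right b hxy)

theorem ConcaveOn.exists_eq_sum_mul_min {f : ℝ → ℝ} (hf : ConcaveOn ℝ (Ici 0) f)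
    (hmono : MonotoneOn f (Ici 0)) (h0 : f 0 = 0) (R : Finset ℝ) (hR : ∀ x ∈ R, 0 ≤ x) :
    ∃ (m : ℕ) (c t : Fin m → ℝ), (∀ i, 0 ≤ c i) ∧ (∀ i, t i ∈ R) ∧
      ∀ x ∈ R, f x = ∑ i, c i * min x (t i) := by
  induction R using Finset.induction_on_max generalizing f with
  | empty => exact ⟨0, ![], ![], finZeroElim, finZeroElim, by simp⟩
  | insert a R hlt ih =>
    have hR' (x : ℝ) (hx : x ∈ R) : 0 ≤ x := hR x (mem_insert_of_mem hx)
    rcases (hR a (mem_insert_self a R)).eq_or_lt with rfl | ha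
    · obtain rfl : R = ∅ :=
        eq_empty_of_forall_notMem fun x hx => (hlt x hx).not_ge (hR' x hx)
      exact ⟨0, ![], ![], finZeroElim, finZeroElim, by simp [h0]⟩
    set b := (insert 0 R).max' (insert_nonempty 0 R)
    have hb_mem : b ∈ insert 0 R := max'_mem _ _
    have hb : 0 ≤ b := le_max' _ _ (mem_insert_self 0 R)
    have hxb (x : ℝ) (hx : x ∈ R) : x ≤ b := le_max' _ _ (mem_insert_of_mem hx)
    have hba : b < a := by
      rcases mem_insert.1 hb_mem with h | h
      · rwa [← h] at ha
      · exact hlt b h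
    have hμ : 0 ≤ slope f b a := hmono.slope_nonneg hb (hb.trans hba.le)
    set μ := slope f b a with hμ_def
    set g : ℝ → ℝ := fun x => f (min x b) - μ * min x b
    have hg0 : g 0 = 0 := by simp [g, min_eq_left hb, h0]
    obtain ⟨m, c, t, hc, htR, hrep⟩ := ih (f := g) (hf.concaveOn_sub_slope_mul_min hb hba)
      (hf.monotoneOn_sub_slope_mul_min hb hba) hg0 hR'
    have hgb : g b = ∑ i, c i * t i := by
      rcases mem_insert.1 hb_mem with h | h
      · rw [show b = 0 from h, hg0]
        exact (sum_eq_zero fun i _ => by rw [le_antisymm (h ▸ hxb _ (htR i)) (hR' _ (htR i)),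
          mul_zero]).symm
      · rw [hrep b h]
        exact sum_congr rfl fun i _ => by rw [min_eq_right (hxb _ (htR i))]
    refine ⟨m + 1, Fin.cons μ c, Fin.cons a t, Fin.cases hμ hc,
      Fin.cases (mem_insert_self a R) fun i => mem_insert_of_mem (htR i), fun x hx => ?_⟩
    simp only [Fin.sum_univ_succ, Fin.cons_zero, Fin.cons_succ]
    rcases mem_insert.1 hx with rfl | hx
    · rw [min_self, sum_congr rfl fun i _ => by rw [min_eq_right ((hxb _ (htR i)).trans hba.le)],
        ← hgb]
      simp only [g, min_self, hμ_def, slope_def_field]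
      field_simp [(sub_pos.2 hba).ne']
      ring
    · rw [min_eq_left ((hxb x hx).trans hba.le), ← hrep x hx]
      simp only [g, min_eq_left (hxb x hx)]
      ring

lemma min_le_one_sub_mul_add_mul {a s p : ℝ} (hp₀ : 0 ≤ p) (hp₁ : p ≤ 1) :
    min a s ≤ (1 - p) * s + p * a := by
  nlinarith [min_le_left a s, min_le_right a s]

section InnerProductSpace

variable {E F : Type*} [NormedAddCommGroup E] [InnerProductSpace ℝ E]
  [NormedAddCommGroup F] [InnerProductSpace ℝ F]

lemma Orthonormal.sqrt_sum_sq_inner_le {ι : Type*} [Fintype ι] {x : ι → E}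
    (hx : Orthonormal ℝ x) (z : E) : √(∑ i, ⟪x i, z⟫ ^ 2) ≤ ‖z‖ :=
  (Real.sqrt_le_left (norm_nonneg z)).2 <| by simpa using hx.sum_inner_products_le z (s := univ)

lemma sum_inner_apply_le {ι κ : Type*} [Fintype ι] [Fintype κ] {S : E →ₗ[ℝ] E}
    (hS : S.IsSymmetric) (T : E →ₗ[ℝ] F) {x : ι → E} (hx : Orthonormal ℝ x) {y : ι → F}
    (hy : Orthonormal ℝ y) (v : OrthonormalBasis κ ℝ E) :
    ∑ i, ⟪y i, T (S (x i))⟫ ≤ ∑ k, ‖S (v k)‖ * ‖T (v k)‖ := by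
  have expand (i : ι) : ⟪y i, T (S (x i))⟫ = ∑ k, ⟪S (v k), x i⟫ * ⟪y i, T (v k)⟫ := by
    conv_lhs => rw [← v.sum_repr' (S (x i))]
    simp [inner_sum, inner_smul_right, hS _ (x i)]
  calc ∑ i, ⟪y i, T (S (x i))⟫ = ∑ k, ∑ i, ⟪S (v k), x i⟫ * ⟪y i, T (v k)⟫ := by
        simp_rw [expand]; exact sum_comm
    _ ≤ ∑ k, √(∑ i, ⟪x i, S (v k)⟫ ^ 2) * √(∑ i, ⟪y i, T (v k)⟫ ^ 2) := by
        gcongr with k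
        simpa only [real_inner_comm (x _)] using Real.sum_mul_le_sqrt_mul_sqrt _ _ _
    _ ≤ ∑ k, ‖S (v k)‖ * ‖T (v k)‖ := by
        gcongr with k
        · exact hx.sqrt_sum_sq_inner_le _
        · exact hy.sqrt_sum_sq_inner_le _

lemma OrthonormalBasis.sum_inner_starProjection [FiniteDimensional ℝ E] {ι : Type*} [Fintype ι]
    (b : OrthonormalBasis ι ℝ E) (K : Submodule ℝ E) :
    ∑ i, ⟪b i, K.starProjection (b i)⟫ = finrank ℝ K := by
  have hK : LinearMap.IsProj K (K.starProjection : E →ₗ[ℝ] E) :=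
    ⟨K.starProjection_apply_mem, fun x hx => K.starProjection_eq_self_iff.2 hx⟩
  simpa [LinearMap.trace_eq_sum_inner _ b] using hK.trace

lemma Submodule.real_inner_starProjection_self (K : Submodule ℝ E) [K.HasOrthogonalProjection]
    (v : E) : ⟪v, K.starProjection v⟫ = ‖K.starProjection v‖ ^ 2 := by
  rw [real_inner_comm]
  simpa only [RCLike.re_to_real, Submodule.starProjection_apply, Submodule.coe_norm] using
    K.re_inner_starProjection_eq_normSq v

end InnerProductSpace

lemma singularValue_nonneg {d1 d2 : ℕ} (M : Matrix (Fin d1) (Fin d2) ℝ) (j : Fin d2) :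
    0 ≤ singularValue M j :=
  Real.sqrt_nonneg _

namespace Matrix

variable {d1 d2 : ℕ} (M : Matrix (Fin d1) (Fin d2) ℝ)

noncomputable abbrev rightSingularBasis : OrthonormalBasis (Fin d2) ℝ (EuclideanSpace ℝ (Fin d2)) :=
  (isHermitian_conjTranspose_mul_self M).eigenvectorBasis

lemma inner_toEuclideanLin_rightSingularBasis (j : Fin d2) (x : EuclideanSpace ℝ (Fin d2)) :
    ⟪M.toEuclideanLin (M.rightSingularBasis j), M.toEuclideanLin x⟫ =
      singularValue M j ^ 2 * ⟪M.rightSingularBasis j, x⟫ := by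
  have hMM := (isHermitian_conjTranspose_mul_self M).mulVec_eigenvectorBasis j
  rw [← LinearMap.adjoint_inner_left, ← toEuclideanLin_conjTranspose_eq_adjoint,
    singularValue, Real.sq_sqrt (eigenvalues_conjTranspose_mul_self_nonneg M j),
    ← real_inner_smul_left]
  congr 1
  ext i
  simpa [rightSingularBasis, toLpLin_apply, mulVec_mulVec] using congrFun hMM i

lemma norm_toEuclideanLin_rightSingularBasis (j : Fin d2) :
    ‖M.toEuclideanLin (M.rightSingularBasis j)‖ = singularValue M j := by
  rw [norm_eq_sqrt_real_inner, inner_toEuclideanLin_rightSingularBasis, real_inner_self_eq_norm_sq,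
    M.rightSingularBasis.orthonormal.1 j]
  simp [Real.sqrt_sq (singularValue_nonneg M j)]

/-- Since `0⁻¹ = 0`, this is `0` when the singular value vanishes. -/
noncomputable def leftSingularVector (j : Fin d2) : EuclideanSpace ℝ (Fin d1) :=
  (singularValue M j)⁻¹ • M.toEuclideanLin (M.rightSingularBasis j)

lemma inner_leftSingularVector_toEuclideanLin (j : Fin d2) (x : EuclideanSpace ℝ (Fin d2)) :
    ⟪M.leftSingularVector j, M.toEuclideanLin x⟫ =
      singularValue M j * ⟪M.rightSingularBasis j, x⟫ := by
  rw [leftSingularVector, real_inner_smul_left, inner_toEuclideanLin_rightSingularBasis]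
  by_cases h : singularValue M j = 0
  · simp [h]
  · field_simp

lemma orthonormal_leftSingularVector :
    Orthonormal ℝ fun j : {j // singularValue M j ≠ 0} => M.leftSingularVector j := by
  rw [orthonormal_iff_ite]
  rintro ⟨i, hi⟩ ⟨j, hj⟩
  rw [leftSingularVector, real_inner_smul_left, real_inner_comm,
    inner_leftSingularVector_toEuclideanLin,
    orthonormal_iff_ite.1 M.rightSingularBasis.orthonormal]
  by_cases hij : i = j
  · subst hij; field_simp
  · simp [hij, Ne.symm hij]

end Matrix

section

open Matrix

variable {d1 d2 : ℕ}

lemma sum_min_singularValue_le (C : Matrix (Fin d1) (Fin d2) ℝ)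
    (W : Submodule ℝ (EuclideanSpace ℝ (Fin d2))) (s : ℝ) :
    ∑ j, min (singularValue C j) s ≤ s * finrank ℝ W +
      ∑ j : {j // singularValue C j ≠ 0}, ⟪C.leftSingularVector j,
        C.toEuclideanLin (Wᗮ.starProjection (C.rightSingularBasis j))⟫ := by
  set v := C.rightSingularBasis
  set p : Fin d2 → ℝ := fun j => ⟪v j, Wᗮ.starProjection (v j)⟫
  have hp (j : Fin d2) : p j = ‖Wᗮ.starProjection (v j)‖ ^ 2 :=
    Wᗮ.real_inner_starProjection_self (v j)
  have hp₁ (j : Fin d2) : p j ≤ 1 := by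
    calc p j = ‖Wᗮ.starProjection (v j)‖ ^ 2 := hp j
      _ ≤ ‖v j‖ ^ 2 := by gcongr; exact Wᗮ.norm_starProjection_apply_le _
      _ = 1 := by rw [v.orthonormal.1 j, one_pow]
  have hsum : ∑ j, (1 - p j) = finrank ℝ W := by
    have hdim : (finrank ℝ W + finrank ℝ Wᗮ : ℝ) = d2 := by
      exact_mod_cast W.finrank_add_finrank_orthogonal.trans finrank_euclideanSpace_fin
    rw [sum_sub_distrib, v.sum_inner_starProjection Wᗮ]
    simp only [sum_const, card_univ, Fintype.card_fin, nsmul_eq_mul, mul_one]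
    linarith
  have hinner : ∑ j : {j // singularValue C j ≠ 0}, ⟪C.leftSingularVector j,
      C.toEuclideanLin (Wᗮ.starProjection (v j))⟫ = ∑ j, p j * singularValue C j := by
    classical
    have hzero : ∑ j : {j // ¬singularValue C j ≠ 0}, p j * singularValue C j = 0 :=
      sum_eq_zero fun j _ => by rw [not_not.1 j.2, mul_zero]
    rw [← Fintype.sum_subtype_add_sum_subtype (fun j => singularValue C j ≠ 0), hzero, add_zero]
    exact sum_congr rfl fun j _ => by rw [inner_leftSingularVector_toEuclideanLin, mul_comm]
  calc ∑ j, min (singularValue C j) s ≤ ∑ j, ((1 - p j) * s + p j * singularValue C j) :=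
        sum_le_sum fun j _ => min_le_one_sub_mul_add_mul (by rw [hp]; positivity) (hp₁ j)
    _ = _ := by rw [sum_add_distrib, ← sum_mul, hsum, hinner, mul_comm]

lemma sum_inner_starProjection_add_le_sum_min (M : Matrix (Fin d1) (Fin d2) ℝ)
    (W : Submodule ℝ (EuclideanSpace ℝ (Fin d2))) (s : ℝ)
    (hW : ∀ k, s < singularValue M k → M.rightSingularBasis k ∈ W)
    {ι : Type*} [Fintype ι] {x : ι → EuclideanSpace ℝ (Fin d2)} (hx : Orthonormal ℝ x)
    {y : ι → EuclideanSpace ℝ (Fin d1)} (hy : Orthonormal ℝ y) :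
    ∑ i, ⟪y i, M.toEuclideanLin (Wᗮ.starProjection (x i))⟫ + s * #{k | s < singularValue M k} ≤
      ∑ k, min (singularValue M k) s := by
  set v := M.rightSingularBasis
  have hk (k : Fin d2) : ‖Wᗮ.starProjection (v k)‖ * singularValue M k +
      (if s < singularValue M k then s else 0) ≤ min (singularValue M k) s := by
    split_ifs with h
    · rw [Wᗮ.starProjection_apply_eq_zero_iff.2 (W.le_orthogonal_orthogonal (hW k h)), norm_zero,
        zero_mul, zero_add, min_eq_right h.le]
    · rw [add_zero, min_eq_left (not_lt.1 h)]
      exact mul_le_of_le_one_left (singularValue_nonneg M k)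
        ((Wᗮ.norm_starProjection_apply_le _).trans_eq (v.orthonormal.1 k))
  calc _ ≤ ∑ k, ‖Wᗮ.starProjection (v k)‖ * singularValue M k +
        ∑ k, if s < singularValue M k then s else 0 := by
        gcongr ?_ + ?_
        · simpa only [ContinuousLinearMap.coe_coe, v, norm_toEuclideanLin_rightSingularBasis] using
            sum_inner_apply_le Wᗮ.starProjection_isSymmetric M.toEuclideanLin hx hy v
        · simp [sum_ite, mul_comm]
    _ ≤ _ := by rw [← sum_add_distrib]; exact sum_le_sum fun k _ => hk k

theorem sum_min_singularValue_add_le (A B : Matrix (Fin d1) (Fin d2) ℝ) {s : ℝ} (hs : 0 ≤ s) :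
    ∑ j, min (singularValue (A + B) j) s ≤
      ∑ j, min (singularValue A j) s + ∑ j, min (singularValue B j) s := by
  classical
  set SA : Finset (Fin d2) := {k | s < singularValue A k}
  set SB : Finset (Fin d2) := {k | s < singularValue B k}
  set W : Submodule ℝ (EuclideanSpace ℝ (Fin d2)) :=
    Submodule.span ℝ ↑(SA.image A.rightSingularBasis ∪ SB.image B.rightSingularBasis)
  have hW : (finrank ℝ W : ℝ) ≤ #SA + #SB := by
    exact_mod_cast (finrank_span_finset_le_card _).trans
      ((Finset.card_union_le _ _).trans (add_le_add card_image_le card_image_le))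
  have hWA (k : Fin d2) (hk : s < singularValue A k) : A.rightSingularBasis k ∈ W :=
    Submodule.subset_span (mem_union_left _ (mem_image_of_mem _ (by simpa [SA] using hk)))
  have hWB (k : Fin d2) (hk : s < singularValue B k) : B.rightSingularBasis k ∈ W :=
    Submodule.subset_span (mem_union_right _ (mem_image_of_mem _ (by simpa [SB] using hk)))
  set C := A + B
  have hx : Orthonormal ℝ fun j : {j // singularValue C j ≠ 0} => C.rightSingularBasis j :=
    C.rightSingularBasis.orthonormal.comp _ Subtype.val_injective
  have hy := C.orthonormal_leftSingularVector
  calc ∑ j, min (singularValue C j) s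
      ≤ s * finrank ℝ W + ∑ j : {j // singularValue C j ≠ 0}, ⟪C.leftSingularVector j,
          C.toEuclideanLin (Wᗮ.starProjection (C.rightSingularBasis j))⟫ :=
        sum_min_singularValue_le C W s
    _ ≤ (∑ j : {j // singularValue C j ≠ 0}, ⟪C.leftSingularVector j,
          A.toEuclideanLin (Wᗮ.starProjection (C.rightSingularBasis j))⟫ + s * #SA) +
        (∑ j : {j // singularValue C j ≠ 0}, ⟪C.leftSingularVector j,
          B.toEuclideanLin (Wᗮ.starProjection (C.rightSingularBasis j))⟫ + s * #SB) := by
        simp only [C, map_add, LinearMap.add_apply, inner_add_right, sum_add_distrib]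
        linarith [mul_le_mul_of_nonneg_left hW hs]
    _ ≤ _ := add_le_add (sum_inner_starProjection_add_le_sum_min A W s hWA hx hy)
        (sum_inner_starProjection_add_le_sum_min B W s hWB hx hy)

end

theorem rotfeld_subadditive_general {d1 d2 : ℕ} (f : ℝ → ℝ)
    (hconc : ConcaveOn ℝ (Set.Ici 0) f) (hmono : MonotoneOn f (Set.Ici 0))
    (h0 : f 0 = 0)
    (A B : Matrix (Fin d1) (Fin d2) ℝ) :
    singValSum f (A + B) ≤ singValSum f A + singValSum f B := by
  classical
  set R : Finset ℝ := (univ.image (singularValue A) ∪ univ.image (singularValue B)) ∪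
    univ.image (singularValue (A + B))
  have hR (x : ℝ) (hx : x ∈ R) : 0 ≤ x := by
    simp only [R, Finset.mem_union, Finset.mem_image, Finset.mem_univ, true_and] at hx
    obtain (⟨j, rfl⟩ | ⟨j, rfl⟩) | ⟨j, rfl⟩ := hx <;> exact singularValue_nonneg _ j
  obtain ⟨m, c, t, hc, htR, hrep⟩ := hconc.exists_eq_sum_mul_min hmono h0 R hR
  have hsum (M : Matrix (Fin d1) (Fin d2) ℝ) (hM : ∀ j, singularValue M j ∈ R) :
      singValSum f M = ∑ i, c i * ∑ j, min (singularValue M j) (t i) := by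
    simp only [singValSum, hrep _ (hM _), mul_sum]
    exact sum_comm
  rw [hsum A (by simp [R]), hsum B (by simp [R]), hsum (A + B) (by simp [R]), ← sum_add_distrib]
  gcongr with i
  rw [← mul_add]
  exact mul_le_mul_of_nonneg_left
    (sum_min_singularValue_add_le A B (hR _ (htR i))) (hc i)

/-- Rotfel'd inequality: for concave increasing `f : ℝ₊ → ℝ₊` with
`f 0 = 0`, `∑ f(σ_j(Θ + Θ')) ≤ ∑ f(σ_j Θ) + ∑ f(σ_j Θ')`. -/
theorem rotfeld_subadditive {d1 d2 : ℕ} (f : ℝ → ℝ)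
    (hconc : ConcaveOn ℝ (Set.Ici 0) f) (hmono : MonotoneOn f (Set.Ici 0))
    (h0 : f 0 = 0) (hnn : ∀ t : ℝ, 0 ≤ t → 0 ≤ f t)
    (A B : Matrix (Fin d1) (Fin d2) ℝ) :
    singValSum f (A + B) ≤ singValSum f A + singValSum f B :=
  rotfeld_subadditive_general f hconc hmono h0 A B
end

section
/- Let $\Theta^*\in\mathbb{R}^{d_1\times d_2}$ have rank $r$ and let $\Delta\in\mathbb{R}^{d_1\times d_2}$ be arbitrary. Then there exists a decomposition $\Delta=\Delta'+\Delta''$ such that $\mathrm{rank}(\Delta')\le 2r$, the row space of $\Delta''$ is orthogonal to the row space of $\Theta^*$, and the column space of $\Delta''$ is orthogonal to the column space of $\Theta^*$. -/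
/-!
Let `P` and `Q` be the orthogonal projections onto the column space and the row space of `Θ`.
Then `Δ'' = (1 - P) Δ (1 - Q)` is annihilated by `Θ` on both sides, while
`Δ' = Δ - Δ'' = P Δ + (1 - P) Δ Q` has rank at most `rank P + rank Q = 2 rank Θ`.
In a singular-vector basis of `Θ`, `Δ''` is the lower-right block `Ξ₂₂`.
-/

open Matrix

namespace Matrix

variable {m n : Type*}

theorem rank_add_le {K : Type*} [Field K] [Fintype m] [Fintype n] (A B : Matrix m n K) :
    (A + B).rank ≤ A.rank + B.rank := by
  rw [rank, rank, rank, mulVecLin_add]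
  calc _ ≤ Module.finrank K ↥(LinearMap.range A.mulVecLin ⊔ LinearMap.range B.mulVecLin) :=
        Submodule.finrank_mono (LinearMap.range_add_le _ _)
    _ ≤ _ := Submodule.finrank_add_le_finrank_add_finrank _ _

variable {𝕜 : Type*} [RCLike 𝕜] [Fintype m] [DecidableEq m] [Fintype n] [DecidableEq n]

theorem exists_isHermitian_mul_eq_self_rank_le (A : Matrix m n 𝕜) :
    ∃ P : Matrix m m 𝕜, P.IsHermitian ∧ P * A = A ∧ P.rank ≤ A.rank := by
  let U := LinearMap.range (toEuclideanLin A)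
  refine ⟨toEuclideanLin.symm U.starProjection.toLinearMap, ?_, ?_, ?_⟩
  · rw [← isSymmetric_toEuclideanLin_iff, LinearEquiv.apply_symm_apply]
    exact U.starProjection_isSymmetric
  · apply toEuclideanLin.injective
    ext v : 1
    simp [Submodule.starProjection_eq_self_iff, U]
  · rw [rank_eq_finrank_range_toLin _ (PiLp.basisFun 2 𝕜 m) (PiLp.basisFun 2 𝕜 m),
      rank_eq_finrank_range_toLin A (PiLp.basisFun 2 𝕜 m) (PiLp.basisFun 2 𝕜 n), ← toLpLin_eq_toLin,
      ← toLpLin_eq_toLin, LinearEquiv.apply_symm_apply]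
    exact Submodule.finrank_mono fun _ ⟨v, hv⟩ ↦ hv ▸ U.starProjection_apply_mem v

open scoped ComplexOrder in
theorem exists_eq_add_rank_le_two_mul_orthogonal (A Δ : Matrix m n 𝕜) :
    ∃ Δ' Δ'' : Matrix m n 𝕜,
      Δ = Δ' + Δ'' ∧ Δ'.rank ≤ 2 * A.rank ∧ Δ'' * Aᴴ = 0 ∧ Δ''ᴴ * A = 0 := by
  obtain ⟨P, hP, hPA, hPrank⟩ := exists_isHermitian_mul_eq_self_rank_le A
  obtain ⟨Q, -, hQA, hQrank⟩ := exists_isHermitian_mul_eq_self_rank_le Aᴴ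
  have hP₀ : (1 - P) * A = 0 := by rw [Matrix.sub_mul, Matrix.one_mul, hPA, sub_self]
  have hQ₀ : (1 - Q) * Aᴴ = 0 := by rw [Matrix.sub_mul, Matrix.one_mul, hQA, sub_self]
  refine ⟨P * Δ + (1 - P) * Δ * Q, (1 - P) * Δ * (1 - Q), ?_, ?_, ?_, ?_⟩
  · simp only [Matrix.sub_mul, Matrix.mul_sub, Matrix.one_mul, Matrix.mul_one]
    abel
  · rw [rank_conjTranspose] at hQrank
    calc _ ≤ (P * Δ).rank + ((1 - P) * Δ * Q).rank := rank_add_le _ _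
      _ ≤ P.rank + Q.rank := add_le_add (rank_mul_le_left _ _) (rank_mul_le_right _ _)
      _ ≤ 2 * A.rank := by omega
  · rw [Matrix.mul_assoc, hQ₀, Matrix.mul_zero]
  · simp only [conjTranspose_mul, conjTranspose_sub, conjTranspose_one, hP.eq, Matrix.mul_assoc,
      hP₀, Matrix.mul_zero]

end Matrix

/-- Recht–Fazel–Parrilo decomposition: if `rank Θ* = r`, then any `Δ`
decomposes as `Δ = Δ' + Δ''` with `rank Δ' ≤ 2r`, the row space of `Δ''` orthogonal
to that of `Θ*` (`Δ'' * Θ*ᵀ = 0`), and the column space of `Δ''` orthogonal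
to that of `Θ*` (`Δ''ᵀ * Θ* = 0`). -/
theorem matrix_decomposition_lemma {d1 d2 r : ℕ}
    (Θs Δ : Matrix (Fin d1) (Fin d2) ℝ) (hr : Θs.rank = r) :
    ∃ Δ' Δ'' : Matrix (Fin d1) (Fin d2) ℝ,
      Δ = Δ' + Δ'' ∧ Δ'.rank ≤ 2 * r ∧ Δ'' * Θsᵀ = 0 ∧ Δ''ᵀ * Θs = 0 := by
  subst hr
  simpa only [conjTranspose_eq_transpose_of_trivial] using
    exists_eq_add_rank_le_two_mul_orthogonal Θs Δ
end
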